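/- Fix ℓ ∈ ℕ₀ and d = (d_1,…,d_ℓ), r = (r_1,…,r_ℓ) ∈ ℕ^ℓ with d_i ≥ r_i for all i ∈ [ℓ], and set m_ℓ := Σ_{k=1}^ℓ (r_k − 1)·∏_{i=k+1}^ℓ d_i. If n ≥ m_ℓ, then for every v ∈ ℝ^n and every subset I ⊆ [n] with |I| = m_ℓ there exists an (actual) polytope P belonging to the class Q̂_ℓ whose affine hull equals v + span{e_i : i ∈ I}, where e_1,…,e_n is the standard basis of ℝ^n. -/

import Mathlib

open Pointwise

noncomputable section SparseMaxout

/-- Vectors in `ℝ^n`. -/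
abbrev Vec (n : ℕ) := Fin n → ℝ

/-- A polytope is the convex hull of a finite nonempty set of points. -/
def IsPolytope {n : ℕ} (P : Set (Vec n)) : Prop :=
  ∃ s : Finset (Vec n), s.Nonempty ∧ P = convexHull ℝ (s : Set (Vec n))

/-- A simplex is the convex hull of a finite nonempty affinely independent set of points. -/
def IsSimplex {n : ℕ} (S : Set (Vec n)) : Prop :=
  ∃ (k : ℕ) (pts : Fin k → Vec n), 0 < k ∧ AffineIndependent ℝ pts ∧
    S = convexHull ℝ (Set.range pts)

/-- The support function `f_P(x) = max_{a ∈ P} ⟨a, x⟩` of a set `P`. -/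
def suppFn {n : ℕ} (P : Set (Vec n)) (x : Vec n) : ℝ :=
  sSup ((fun a => ∑ i, a i * x i) '' P)

/-- The dimension of a polytope: the dimension of its affine hull. -/
def polyDim {n : ℕ} (P : Set (Vec n)) : ℕ :=
  Module.finrank ℝ (affineSpan ℝ P).direction

/-- A (representative of a) virtual polytope: a pair `(P, Q)` standing for `P - Q`. -/
abbrev VP (n : ℕ) := Set (Vec n) × Set (Vec n)

/-- Two pairs represent the same virtual polytope: `P₁ - Q₁ = P₂ - Q₂` iff
`P₁ + Q₂ = P₂ + Q₁` (Minkowski sums). -/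
def vEquiv {n : ℕ} (A B : VP n) : Prop :=
  A.1 + B.2 = B.1 + A.2

/-- Both components are polytopes. -/
def IsPolyPair {n : ℕ} (A : VP n) : Prop :=
  IsPolytope A.1 ∧ IsPolytope A.2

/-- Scalar multiple of a virtual polytope: `λ(P - Q) := λP - λQ`. -/
def vSMul {n : ℕ} (c : ℝ) (A : VP n) : VP n := (c • A.1, c • A.2)

/-- Convex hull of finitely many virtual polytopes:
`conv(P₁-Q₁, …, P_m-Q_m) := conv(⋃ᵢ (Pᵢ + Σ_{k≠i} Q_k)) - Σ_k Q_k`. -/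
def vConv {n m : ℕ} (V : Fin m → VP n) : VP n :=
  (convexHull ℝ (⋃ i, ((V i).1 + ∑ k ∈ Finset.univ.erase i, (V k).2)),
   ∑ k, (V k).2)

/-- The dimension of a virtual polytope: `min{dim(A + B) : V = A - B}` over
polytope representations. -/
def vDim {n : ℕ} (V : VP n) : ℕ :=
  sInf {m | ∃ A B : Set (Vec n), IsPolytope A ∧ IsPolytope B ∧
    vEquiv (A, B) V ∧ polyDim (A + B) = m}

/-- Support function of a virtual polytope: `f_{P-Q} := f_P - f_Q`. -/
def vSuppFn {n : ℕ} (V : VP n) (x : Vec n) : ℝ :=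
  suppFn V.1 x - suppFn V.2 x

/-- The recursively defined classes `Q̂_ℓ` of virtual polytopes dual to sparse maxout
networks with indegree constraints `d` and ranks `r` (layer `k` uses `d k`, `r k`);
membership is up to equality of virtual polytopes. -/
def Qhat (n : ℕ) (d r : ℕ → ℕ) : ℕ → Set (VP n)
  | 0 => {V | IsPolyPair V ∧ ∃ v : Vec n, vEquiv V ({v}, {0})}
  | (k+1) => {V | IsPolyPair V ∧
      ∃ (α : Fin (r (k+1)) → Fin (d (k+1)) → ℝ) (W : Fin (d (k+1)) → VP n),
        (∀ j, W j ∈ Qhat n d r k) ∧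
        vEquiv V (vConv (fun i => ∑ j, vSMul (α i j) (W j)))}

/-- `Q_n(ℓ,d,r)`: finite real linear combinations of elements of `Q̂_ℓ`. -/
def Qfull (n : ℕ) (d r : ℕ → ℕ) (ℓ : ℕ) : Set (VP n) :=
  {V | IsPolyPair V ∧ ∃ (p : ℕ) (c : Fin p → ℝ) (W : Fin p → VP n),
    (∀ i, W i ∈ Qhat n d r ℓ) ∧ vEquiv V (∑ i, vSMul (c i) (W i))}

/-- `m_ℓ = Σ_{k=1}^ℓ (r_k - 1) ∏_{i=k+1}^ℓ d_i`. -/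
def mval (d r : ℕ → ℕ) (ℓ : ℕ) : ℕ :=
  ∑ k ∈ Finset.Icc 1 ℓ, (r k - 1) * ∏ i ∈ Finset.Icc (k+1) ℓ, d i

/-- The recursively defined classes `N̂_ℓ` of functions computed by a single output
neuron of an indegree-`d`-constrained rank-`r` maxout network with `ℓ` hidden layers. -/
def Nhat (n : ℕ) (d r : ℕ → ℕ) : ℕ → Set ((Vec n) → ℝ)
  | 0 => {f | ∃ v : Vec n, f = fun x => ∑ i, v i * x i}
  | (k+1) => {f | ∃ (α : Fin (r (k+1)) → Fin (d (k+1)) → ℝ)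
      (g : Fin (d (k+1)) → (Vec n) → ℝ),
      (∀ j, g j ∈ Nhat n d r k) ∧
      f = fun x => ⨆ i, ∑ j, α i j * g j x}

/-- `N_n(ℓ,d,r)`: finite real linear combinations of functions in `N̂_ℓ`. -/
def Nfull (n : ℕ) (d r : ℕ → ℕ) (ℓ : ℕ) : Set ((Vec n) → ℝ) :=
  {f | ∃ (p : ℕ) (c : Fin p → ℝ) (g : Fin p → (Vec n) → ℝ),
    (∀ i, g i ∈ Nhat n d r ℓ) ∧ f = fun x => ∑ i, c i * g i x}

/-- Unconstrained single-neuron classes `N̂_ℓ` (no indegree constraint). -/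
def NhatU (n : ℕ) (r : ℕ → ℕ) : ℕ → Set ((Vec n) → ℝ)
  | 0 => {f | ∃ v : Vec n, f = fun x => ∑ i, v i * x i}
  | (k+1) => {f | ∃ (m : ℕ) (α : Fin (r (k+1)) → Fin m → ℝ)
      (g : Fin m → (Vec n) → ℝ),
      (∀ j, g j ∈ NhatU n r k) ∧
      f = fun x => ⨆ i, ∑ j, α i j * g j x}

/-- `N_n(ℓ,r)`: finite real linear combinations of functions in the unconstrained `N̂_ℓ`. -/
def NfullU (n : ℕ) (r : ℕ → ℕ) (ℓ : ℕ) : Set ((Vec n) → ℝ) :=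
  {f | ∃ (p : ℕ) (c : Fin p → ℝ) (g : Fin p → (Vec n) → ℝ),
    (∀ i, g i ∈ NhatU n r ℓ) ∧ f = fun x => ∑ i, c i * g i x}

/-- `MAX_n(m)`: finite real linear combinations of maxima of at most `m` linear functions. -/
def MAXn (n m : ℕ) : Set ((Vec n) → ℝ) :=
  {f | ∃ (p : ℕ) (β : Fin p → ℝ) (a : Fin p → Fin m → Vec n),
    f = fun x => ∑ i, β i * ⨆ j, ∑ t, a i j t * x t}

/-!
By induction on `ℓ` one realizes, more generally, every affine subspace `v + span (u₁, …, u_m)`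
with `m = m_ℓ` arbitrary vectors. Write `m_{ℓ+1} = (r - 1) + d m_ℓ` and split the vectors into
`r - 1` new directions `f_s` and `d` blocks of `m_ℓ`. By induction, polytopes `P_j` of `Q̂_ℓ`
realize `w_j + span (block j)`, where `w_j` is `f_s` for `r - 1` of the columns, `v` for one more
and `0` for the others. In `conv (Σ_j α_ij P_j)` let row `0` be all ones and row `s` all ones
except a `2` in column `s`: every `Σ_j α_ij P_j` lies in `v + span u`, the row-`0` sum already
has the direction of all the blocks, and the difference of rows `s` and `0` supplies `f_s`.
-/

open AffineSubspace

section AffineSpan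

variable {k V : Type*} [Ring k] [AddCommGroup V] [Module k V]

theorem AffineSubspace.coe_mk'_eq_vadd (p : V) (U : Submodule k V) :
    (mk' p U : Set V) = p +ᵥ (U : Set V) := by
  ext x
  rw [SetLike.mem_coe, mem_mk', Set.mem_vadd_set_iff_neg_vadd_mem, vsub_eq_sub, vadd_eq_add,
    neg_add_eq_sub, SetLike.mem_coe]

theorem AffineSubspace.mk'_le_mk'_of_sub_mem {p q : V} {U W : Submodule k V} (hUW : U ≤ W)
    (hpq : p - q ∈ W) : mk' p U ≤ mk' q W := fun x hx => by
  rw [mem_mk', vsub_eq_sub] at hx ⊢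
  simpa using W.add_mem (hUW hx) hpq

theorem AffineSubspace.mk'_eq_mk'_of_sub_mem {p q : V} {U : Submodule k V} (hpq : p - q ∈ U) :
    mk' p U = mk' q U := by
  simpa using mk'_eq (s := mk' q U) (by rwa [mem_mk', vsub_eq_sub])

theorem affineSpan_eq_mk'_of_subset_of_le {s : Set V} {p : V} {U : Submodule k V}
    (hs : s.Nonempty) (hsub : s ⊆ mk' p U) (hU : U ≤ vectorSpan k s) :
    affineSpan k s = mk' p U := by
  have hle : affineSpan k s ≤ mk' p U := affineSpan_le.2 hsub
  refine eq_of_direction_eq_of_nonempty_of_le ?_ ((affineSpan_nonempty (k := k)).2 hs) hle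
  rw [direction_affineSpan, direction_mk']
  exact le_antisymm (by simpa only [direction_affineSpan, direction_mk'] using direction_le hle) hU

theorem vectorSpan_le_vectorSpan_add_left {s t : Set V} (hs : s.Nonempty) :
    vectorSpan k t ≤ vectorSpan k (s + t) := by
  obtain ⟨q, hq⟩ := hs
  rw [← vectorSpan_vadd k t q, ← Set.singleton_vadd]
  exact vectorSpan_mono k (Set.add_subset_add_right (Set.singleton_subset_iff.2 hq))

theorem vectorSpan_le_vectorSpan_sum {ι : Type*} [Fintype ι] {P : ι → Set V}
    (hP : ∀ i, (P i).Nonempty) (i : ι) : vectorSpan k (P i) ≤ vectorSpan k (∑ j, P j) := by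
  classical
  rw [← Finset.add_sum_erase _ _ (Finset.mem_univ i), add_comm]
  exact vectorSpan_le_vectorSpan_add_left <|
    Finset.sum_induction _ Set.Nonempty (fun _ _ => Set.Nonempty.add) Set.zero_nonempty
      fun j _ => hP j

theorem sum_smul_subset_mk' {ι : Type*} [Fintype ι] (a : ι → k) {P : ι → Set V} {w : ι → V}
    {U : Submodule k V} (hP : ∀ i, P i ⊆ mk' (w i) U) :
    ∑ i, a i • P i ⊆ mk' (∑ i, a i • w i) U := by
  intro x hx
  obtain ⟨g, hg, rfl⟩ := (Set.mem_fintype_sum _ _).1 hx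
  choose y hy hgy using fun i => Set.mem_smul_set.1 (hg i)
  rw [SetLike.mem_coe, mem_mk', vsub_eq_sub, ← Finset.sum_sub_distrib]
  refine U.sum_mem fun i _ => ?_
  rw [← hgy i, ← smul_sub]
  exact U.smul_mem _ (by simpa [mem_mk'] using hP i (hy i))

end AffineSpan

section MaxoutHull

variable {𝕜 E ι κ : Type*} [Ring 𝕜] [PartialOrder 𝕜] [AddCommGroup E] [Module 𝕜 E] [Fintype κ]

def maxoutHull (α : ι → κ → 𝕜) (P : κ → Set E) : Set E :=
  convexHull 𝕜 (⋃ i, ∑ j, α i j • P j)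

theorem sum_smul_subset_maxoutHull (α : ι → κ → 𝕜) (P : κ → Set E) (i : ι) :
    ∑ j, α i j • P j ⊆ maxoutHull α P :=
  (Set.subset_iUnion (fun i => ∑ j, α i j • P j) i).trans (subset_convexHull 𝕜 _)

theorem sum_smul_mem_maxoutHull (α : ι → κ → 𝕜) {P : κ → Set E} {z : κ → E}
    (hz : ∀ j, z j ∈ P j) (i : ι) : ∑ j, α i j • z j ∈ maxoutHull α P :=
  sum_smul_subset_maxoutHull α P i <|
    Set.finsetSum_mem_finsetSum _ _ _ fun j _ => Set.smul_mem_smul_set (hz j)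

theorem maxoutHull_subset_mk' {α : ι → κ → 𝕜} {P : κ → Set E} {w : κ → E} {p : E}
    {U : Submodule 𝕜 E} (hP : ∀ j, P j ⊆ mk' (w j) U) (hc : ∀ i, ∑ j, α i j • w j - p ∈ U) :
    maxoutHull α P ⊆ mk' p U :=
  convexHull_min (Set.iUnion_subset fun i =>
      (sum_smul_subset_mk' (α i) hP).trans (mk'_le_mk'_of_sub_mem le_rfl (hc i)))
    (AffineSubspace.convex _)

theorem vectorSpan_le_vectorSpan_maxoutHull {α : ι → κ → 𝕜} {i₀ : ι} (hα : ∀ j, α i₀ j = 1)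
    {P : κ → Set E} (hP : ∀ j, (P j).Nonempty) (j : κ) :
    vectorSpan 𝕜 (P j) ≤ vectorSpan 𝕜 (maxoutHull α P) := by
  refine (vectorSpan_le_vectorSpan_sum hP j).trans (vectorSpan_mono 𝕜 ?_)
  simpa only [hα, one_smul] using sum_smul_subset_maxoutHull α P i₀

theorem affineSpan_maxoutHull {α : ι → κ → 𝕜} {i₀ : ι} (hα : ∀ j, α i₀ j = 1)
    {P : κ → Set E} {w : κ → E} {U : κ → Submodule 𝕜 E}
    (hP : ∀ j, affineSpan 𝕜 (P j) = mk' (w j) (U j)) :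
    affineSpan 𝕜 (maxoutHull α P) =
      mk' (∑ j, w j) ((⨆ j, U j) ⊔ vectorSpan 𝕜 (Set.range fun i => ∑ j, α i j • w j)) := by
  set c : ι → E := fun i => ∑ j, α i j • w j
  have hc₀ : c i₀ = ∑ j, w j := by simp only [c, hα, one_smul]
  have hne : ∀ j, (P j).Nonempty := fun j =>
    (affineSpan_nonempty (k := 𝕜)).1 (hP j ▸ mk'_nonempty _ _)
  have hPsub : ∀ j, P j ⊆ mk' (w j) (U j) := fun j => hP j ▸ subset_affineSpan 𝕜 (P j)
  have hU : ∀ j, U j ≤ vectorSpan 𝕜 (maxoutHull α P) := fun j => by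
    rw [← direction_mk' (w j) (U j), ← hP j, direction_affineSpan]
    exact vectorSpan_le_vectorSpan_maxoutHull hα hne j
  choose z hz using hne
  refine affineSpan_eq_mk'_of_subset_of_le ⟨_, sum_smul_mem_maxoutHull α hz i₀⟩ ?_ ?_
  · refine maxoutHull_subset_mk'
      (fun j => (hPsub j).trans ((mk'_le_mk'_iff _).2 (le_sup_left.trans' (le_iSup U j))))
      fun i => ?_
    rw [← hc₀]
    exact Submodule.mem_sup_right
      (vsub_mem_vectorSpan 𝕜 (Set.mem_range_self i) (Set.mem_range_self i₀))
  · refine sup_le (iSup_le hU) ?_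
    rw [vectorSpan_range_eq_span_range_vsub_right 𝕜 c i₀, Submodule.span_le]
    rintro _ ⟨i, rfl⟩
    dsimp only
    have key : c i -ᵥ c i₀ = (∑ j, α i j • z j - ∑ j, α i₀ j • z j)
        - ∑ j, (α i j - α i₀ j) • (z j - w j) := by
      simp only [c, vsub_eq_sub, smul_sub, sub_smul, Finset.sum_sub_distrib]
      abel
    rw [SetLike.mem_coe, key]
    refine Submodule.sub_mem _ (vsub_mem_vectorSpan 𝕜 (sum_smul_mem_maxoutHull α hz i)
      (sum_smul_mem_maxoutHull α hz i₀)) (Submodule.sum_mem _ fun j _ => Submodule.smul_mem _ _ ?_)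
    exact hU j (by simpa [mem_mk'] using hPsub j (hz j))

end MaxoutHull

section Polytope

variable {n : ℕ}

theorem isPolytope_singleton (v : Vec n) : IsPolytope ({v} : Set (Vec n)) :=
  ⟨{v}, Finset.singleton_nonempty v, by simp⟩

theorem IsPolytope.add {A B : Set (Vec n)} (hA : IsPolytope A) (hB : IsPolytope B) :
    IsPolytope (A + B) := by
  classical
  obtain ⟨s, hs, rfl⟩ := hA
  obtain ⟨t, ht, rfl⟩ := hB
  exact ⟨s + t, hs.add ht, by rw [Finset.coe_add, convexHull_add]⟩

theorem IsPolytope.smul (c : ℝ) {A : Set (Vec n)} (hA : IsPolytope A) : IsPolytope (c • A) := by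
  classical
  obtain ⟨s, hs, rfl⟩ := hA
  exact ⟨c • s, hs.smul_finset, by rw [Finset.coe_smul_finset, convexHull_smul]⟩

theorem isPolytope_sum {ι : Type*} [Fintype ι] {P : ι → Set (Vec n)} (h : ∀ i, IsPolytope (P i)) :
    IsPolytope (∑ i, P i) :=
  Finset.sum_induction P IsPolytope (fun _ _ => IsPolytope.add)
    (Set.singleton_zero (α := Vec n) ▸ isPolytope_singleton 0) fun i _ => h i

theorem isPolytope_convexHull_iUnion {ι : Type*} [Fintype ι] [Nonempty ι] {P : ι → Set (Vec n)}
    (h : ∀ i, IsPolytope (P i)) : IsPolytope (convexHull ℝ (⋃ i, P i)) := by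
  classical
  choose s hne hs using h
  refine ⟨Finset.univ.biUnion s, (hne (Classical.arbitrary ι)).mono
    (Finset.subset_biUnion_of_mem s (Finset.mem_univ _)), ?_⟩
  rw [Finset.coe_biUnion]
  simp only [Finset.coe_univ, Set.mem_univ, Set.iUnion_true, hs]
  exact le_antisymm
    (convexHull_min (Set.iUnion_subset fun i =>
        convexHull_mono (Set.subset_iUnion (fun i => (s i : Set (Vec n))) i))
      (convex_convexHull ℝ _))
    (convexHull_mono (Set.iUnion_mono fun i => subset_convexHull ℝ _))

theorem isPolytope_maxoutHull {ι κ : Type*} [Fintype ι] [Nonempty ι] [Fintype κ]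
    (α : ι → κ → ℝ) {P : κ → Set (Vec n)} (hP : ∀ j, IsPolytope (P j)) :
    IsPolytope (maxoutHull α P) :=
  isPolytope_convexHull_iUnion fun _ => isPolytope_sum fun j => (hP j).smul _

end Polytope

section Qhat

variable {n : ℕ} {d r : ℕ → ℕ}

theorem isPolyPair_of_mem_Qhat {ℓ : ℕ} {V : VP n} (h : V ∈ Qhat n d r ℓ) : IsPolyPair V := by
  cases ℓ <;> exact h.1

theorem sum_vSMul_zero {κ : Type*} [Fintype κ] (a : κ → ℝ) (P : κ → Set (Vec n)) :
    ∑ j, vSMul (a j) (P j, ({0} : Set (Vec n))) = (∑ j, a j • P j, 0) := by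
  ext x <;> simp [vSMul, Prod.fst_sum, Prod.snd_sum]

theorem maxoutHull_mem_Qhat_succ {k : ℕ} {ι κ : Type*} [Fintype ι] [Nonempty ι] [Fintype κ]
    (hι : Fintype.card ι = r (k + 1)) (hκ : Fintype.card κ = d (k + 1)) (α : ι → κ → ℝ)
    {P : κ → Set (Vec n)} (hP : ∀ j, (P j, ({0} : Set (Vec n))) ∈ Qhat n d r k) :
    (maxoutHull α P, ({0} : Set (Vec n))) ∈ Qhat n d r (k + 1) := by
  let eι := (Fintype.equivFinOfCardEq hι).symm
  let eκ := (Fintype.equivFinOfCardEq hκ).symm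
  refine ⟨⟨isPolytope_maxoutHull α fun j => (isPolyPair_of_mem_Qhat (hP j)).1,
    isPolytope_singleton 0⟩, fun i j => α (eι i) (eκ j), fun j => (P (eκ j), {0}),
    fun j => hP _, ?_⟩
  have hsum : ∀ i, ∑ j, α i (eκ j) • P (eκ j) = ∑ j, α i j • P j := fun i =>
    Equiv.sum_comp eκ fun j => α i j • P j
  simp only [vEquiv, vConv, sum_vSMul_zero]
  simp only [Finset.sum_const_zero, add_zero, Set.singleton_zero, hsum,
    eι.surjective.iUnion_comp fun i => ∑ j, α i j • P j]
  rfl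

end Qhat

section StepWeights

variable (k : Type*) {V : Type*} [Ring k] [AddCommGroup V] [Module k V]
  (σ τ : Type*) [DecidableEq σ] [DecidableEq τ]

def stepWeights : Option σ → σ ⊕ τ → k :=
  fun i j => i.elim 1 fun s => if j = .inl s then 2 else 1

variable {k σ τ} [Fintype σ] [Fintype τ]

theorem sum_stepWeights_smul_sub (w : σ ⊕ τ → V) (s : σ) :
    ∑ j, stepWeights k σ τ (some s) j • w j - ∑ j, stepWeights k σ τ none j • w j = w (.inl s) := by
  rw [← Finset.sum_sub_distrib, Finset.sum_eq_single (.inl s)]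
  · simp [stepWeights, two_smul]
  · intro j _ hj
    simp [stepWeights, hj]
  · simp

theorem vectorSpan_range_sum_stepWeights_smul (w : σ ⊕ τ → V) :
    vectorSpan k (Set.range fun i => ∑ j, stepWeights k σ τ i j • w j) =
      Submodule.span k (Set.range (w ∘ Sum.inl)) := by
  rw [vectorSpan_range_eq_span_range_vsub_right k _ none]
  refine le_antisymm (Submodule.span_le.2 ?_) (Submodule.span_le.2 ?_)
  · rintro _ ⟨_ | s, rfl⟩
    · simp
    · dsimp only
      rw [vsub_eq_sub, sum_stepWeights_smul_sub]
      exact Submodule.subset_span ⟨s, rfl⟩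
  · rintro _ ⟨s, rfl⟩
    exact Submodule.subset_span ⟨some s, sum_stepWeights_smul_sub w s⟩

end StepWeights

theorem mval_succ (d r : ℕ → ℕ) (ℓ : ℕ) :
    mval d r (ℓ + 1) = (r (ℓ + 1) - 1) + d (ℓ + 1) * mval d r ℓ := by
  unfold mval
  rw [Finset.sum_Icc_succ_top (by omega : 1 ≤ ℓ + 1), Finset.mul_sum, add_comm]
  congr 1
  · rw [Finset.Icc_eq_empty (by omega : ¬ (ℓ + 1 + 1 ≤ ℓ + 1)), Finset.prod_empty, mul_one]
  · refine Finset.sum_congr rfl fun k hk => ?_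
    rw [Finset.prod_Icc_succ_top (by have := (Finset.mem_Icc.mp hk).2; omega : k + 1 ≤ ℓ + 1)]
    ring

def QhatAttainsHulls (n : ℕ) (d r : ℕ → ℕ) (ℓ : ℕ) : Prop :=
  ∀ (v : Vec n) (u : Fin (mval d r ℓ) → Vec n), ∃ P : Set (Vec n),
    (P, ({0} : Set (Vec n))) ∈ Qhat n d r ℓ ∧
      affineSpan ℝ P = mk' v (Submodule.span ℝ (Set.range u))

section QhatAttainsHulls

variable {n : ℕ} {d r : ℕ → ℕ}

theorem qhatAttainsHulls_zero : QhatAttainsHulls n d r 0 := by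
  intro v u
  have hu : Set.range u = ∅ := Set.range_eq_empty_iff.2 ⟨fun t => by simpa [mval] using t.2⟩
  refine ⟨{v}, ⟨⟨isPolytope_singleton v, isPolytope_singleton 0⟩, v, rfl⟩, ?_⟩
  rw [hu, Submodule.span_empty]
  exact affineSpan_eq_mk'_of_subset_of_le (Set.singleton_nonempty v)
    (Set.singleton_subset_iff.2 (self_mem_mk' v ⊥)) bot_le

theorem QhatAttainsHulls.succ {ℓ : ℕ} (h : QhatAttainsHulls n d r ℓ) (hr : 1 ≤ r (ℓ + 1))
    (hdr : r (ℓ + 1) ≤ d (ℓ + 1)) : QhatAttainsHulls n d r (ℓ + 1) := by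
  intro v u
  set R := r (ℓ + 1)
  set D := d (ℓ + 1)
  set M := mval d r ℓ
  -- columns `inl s` carry the new directions, `inr none` the base point `v`, the rest are idle
  let κ := Fin (R - 1) ⊕ Option (Fin (D - R))
  have hι : Fintype.card (Option (Fin (R - 1))) = R := by simp; omega
  have hκ : Fintype.card κ = D := by simp [κ]; omega
  let σ : Fin (R - 1) ⊕ κ × Fin M ≃ Fin (mval d r (ℓ + 1)) :=
    Fintype.equivFinOfCardEq (by simp [hκ, mval_succ, R, D, M])
  let w : κ → Vec n := Sum.elim (fun s => u (σ (.inl s))) fun o => o.elim v 0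
  choose P hPQ hP using fun j => h (w j) fun t => u (σ (.inr (j, t)))
  refine ⟨maxoutHull (stepWeights ℝ _ _) P, maxoutHull_mem_Qhat_succ hι hκ _ hPQ, ?_⟩
  rw [affineSpan_maxoutHull (i₀ := none) (fun _ => rfl) hP, vectorSpan_range_sum_stepWeights_smul]
  have hspan : (⨆ j, Submodule.span ℝ (Set.range fun t => u (σ (.inr (j, t))))) ⊔
      Submodule.span ℝ (Set.range (w ∘ Sum.inl)) = Submodule.span ℝ (Set.range u) := by
    refine le_antisymm (sup_le (iSup_le fun j => Submodule.span_mono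
      (Set.range_comp_subset_range _ u)) (Submodule.span_mono (Set.range_comp_subset_range _ u)))
      (Submodule.span_le.2 ?_)
    rintro _ ⟨x, rfl⟩
    obtain ⟨s | ⟨j, t⟩, rfl⟩ := σ.surjective x
    · exact Submodule.mem_sup_right (Submodule.subset_span ⟨s, rfl⟩)
    · exact Submodule.mem_sup_left (Submodule.mem_iSup_of_mem j (Submodule.subset_span ⟨t, rfl⟩))
  have hbase : ∑ j, w j - v ∈ Submodule.span ℝ (Set.range u) := by
    simp only [w, κ, Fintype.sum_sum_type, Fintype.sum_option, Sum.elim_inl, Sum.elim_inr,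
      Option.elim, Pi.zero_apply, Finset.sum_const_zero, add_zero, add_sub_cancel_right]
    exact Submodule.sum_mem _ fun s _ => Submodule.subset_span (Set.mem_range_self _)
  rw [hspan, mk'_eq_mk'_of_sub_mem hbase]

theorem qhatAttainsHulls (hr : ∀ k, 1 ≤ r k) (hdr : ∀ k, r k ≤ d k) (ℓ : ℕ) :
    QhatAttainsHulls n d r ℓ := by
  induction ℓ with
  | zero => exact qhatAttainsHulls_zero
  | succ ℓ ih => exact ih.succ (hr _) (hdr _)

end QhatAttainsHulls

theorem Qhat_attains_affine_hull_general {n : ℕ} (ℓ : ℕ) (d r : ℕ → ℕ)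
    (hr : ∀ k, 1 ≤ r k) (hdr : ∀ k, r k ≤ d k) :
    ∀ (v : Vec n) (I : Finset (Fin n)), I.card = mval d r ℓ →
      ∃ P : Set (Vec n), IsPolytope P ∧ (P, ({0} : Set (Vec n))) ∈ Qhat n d r ℓ ∧
        (affineSpan ℝ P : Set (Vec n)) =
          v +ᵥ ((Submodule.span ℝ
            ((fun i => Pi.single i (1 : ℝ)) '' (I : Set (Fin n)))) : Set (Vec n)) := by
  intro v I hI
  obtain ⟨P, hPQ, hP⟩ :=
    qhatAttainsHulls hr hdr ℓ v ((fun i => Pi.single i (1 : ℝ)) ∘ I.orderEmbOfFin hI)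
  refine ⟨P, (isPolyPair_of_mem_Qhat hPQ).1, hPQ, ?_⟩
  rw [hP, coe_mk'_eq_vadd, Set.range_comp, Finset.range_orderEmbOfFin]

/-- attainment of the dimension bound, with prescribed affine hull
`v + span{e_i : i ∈ I}`. -/
theorem Qhat_attains_affine_hull {n : ℕ} (ℓ : ℕ) (d r : ℕ → ℕ)
    (hr : ∀ k, 1 ≤ r k) (hdr : ∀ k, r k ≤ d k) (hn : mval d r ℓ ≤ n) :
    ∀ (v : Vec n) (I : Finset (Fin n)), I.card = mval d r ℓ →
      ∃ P : Set (Vec n), IsPolytope P ∧ (P, ({0} : Set (Vec n))) ∈ Qhat n d r ℓ ∧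
        (affineSpan ℝ P : Set (Vec n)) =
          v +ᵥ ((Submodule.span ℝ
            ((fun i => Pi.single i (1 : ℝ)) '' (I : Set (Fin n)))) : Set (Vec n)) :=
  Qhat_attains_affine_hull_general ℓ d r hr hdr
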